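/- Let M be a τ-normal almost paracontact metric para-CR manifold whose characteristic form τ is a contact form and whose Reeb vector field equals the characteristic vector field ζ. Then M is flat as a bi-Legendrian manifold (both Pang invariants Π₊ and Π₋ vanish) if and only if M is normal (K^(1) = [ψ,ψ] − 2dτ⊗ζ = 0 identically). In particular, every para-Sasakian manifold is flat as a bi-Legendrian manifold. -/
import Mathlib


noncomputable section

/-!
An abstract model of smooth geometry: `F` plays the role of the algebra of
smooth real-valued functions on a manifold `M`, `V` plays the role of the
`C^∞(M)`-module of smooth vector fields on `M` (with its Lie bracket), and
`D X f` represents the directional derivative of the function `f` along the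
vector field `X`.
-/
structure SmoothSetting (F V : Type*) [CommRing F] [Algebra ℝ F]
    [LieRing V] [Module F V] [Module ℝ V] [IsScalarTower ℝ F V] where
  D : V → F → F
  D_add : ∀ (X : V) (f g : F), D X (f + g) = D X f + D X g
  D_mul : ∀ (X : V) (f g : F), D X (f * g) = f * D X g + g * D X f
  D_addX : ∀ (X Y : V) (f : F), D (X + Y) f = D X f + D Y f
  D_smulX : ∀ (f : F) (X : V) (k : F), D (f • X) k = f * D X k
  D_bracket : ∀ (X Y : V) (f : F), D ⁅X, Y⁆ f = D X (D Y f) - D Y (D X f)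
  bracket_smul : ∀ (f : F) (X Y : V), ⁅X, f • Y⁆ = f • ⁅X, Y⁆ + D X f • Y

/-- An almost paracontact metric manifold, modelled abstractly: a quadruple
`(ψ, ζ, τ, g)` where `ψ` is a `(1,1)`-tensor field, `ζ` a vector field, `τ` a
one-form and `g` a pseudo-Riemannian metric, satisfying `ψ² = Id - τ ⊗ ζ`,
`τ(ζ) = 1` and `g(ψX, ψY) = -g(X,Y) + τ(X)τ(Y)` (together with the standard
consequent identities `ψζ = 0`, `τ ∘ ψ = 0`), and the Levi-Civita connection
`nabla` of `g` (characterised by metricity and torsion-freeness). -/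
structure APCMS (F V : Type*) [CommRing F] [Algebra ℝ F]
    [LieRing V] [Module F V] [Module ℝ V] [IsScalarTower ℝ F V]
    extends SmoothSetting F V where
  psi : V → V
  zeta : V
  tau : V → F
  g : V → V → F
  psi_add : ∀ X Y : V, psi (X + Y) = psi X + psi Y
  psi_smul : ∀ (f : F) (X : V), psi (f • X) = f • psi X
  tau_add : ∀ X Y : V, tau (X + Y) = tau X + tau Y
  tau_smul : ∀ (f : F) (X : V), tau (f • X) = f * tau X
  g_addX : ∀ X Y Z : V, g (X + Y) Z = g X Z + g Y Z
  g_smulX : ∀ (f : F) (X Y : V), g (f • X) Y = f * g X Y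
  g_symm : ∀ X Y : V, g X Y = g Y X
  g_nondeg : ∀ X : V, (∀ Y : V, g X Y = 0) → X = 0
  psi_psi : ∀ X : V, psi (psi X) = X - tau X • zeta
  tau_zeta : tau zeta = 1
  psi_zeta : psi zeta = 0
  tau_psi : ∀ X : V, tau (psi X) = 0
  g_psi_psi : ∀ X Y : V, g (psi X) (psi Y) = - g X Y + tau X * tau Y
  nabla : V → V → V
  nabla_addX : ∀ X Y Z : V, nabla (X + Y) Z = nabla X Z + nabla Y Z
  nabla_smulX : ∀ (f : F) (X Y : V), nabla (f • X) Y = f • nabla X Y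
  nabla_addY : ∀ X Y Z : V, nabla X (Y + Z) = nabla X Y + nabla X Z
  nabla_leibniz : ∀ (X : V) (f : F) (Y : V),
    nabla X (f • Y) = D X f • Y + f • nabla X Y
  nabla_torsion_free : ∀ X Y : V, nabla X Y - nabla Y X = ⁅X, Y⁆
  nabla_metric : ∀ X Y Z : V,
    D X (g Y Z) = g (nabla X Y) Z + g Y (nabla X Z)

namespace APCMS

variable {F V : Type*} [CommRing F] [Algebra ℝ F]
  [LieRing V] [Module F V] [Module ℝ V] [IsScalarTower ℝ F V]
variable (A : APCMS F V)

/-- The fundamental form `Ψ(X,Y) = g(X, ψY)`. -/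
def Psi2 (X Y : V) : F := A.g X (A.psi Y)

/-- The exterior derivative `dτ`, via the coboundary formula
`2 dτ(X,Y) = X τ(Y) - Y τ(X) - τ([X,Y])`. -/
def dTau (X Y : V) : F :=
  ((1:ℝ)/2) • (A.D X (A.tau Y) - A.D Y (A.tau X) - A.tau ⁅X, Y⁆)

/-- The exterior derivative `dΨ`, via the coboundary formula. -/
def dPsi (X Y Z : V) : F :=
  ((1:ℝ)/3) • (A.D X (A.Psi2 Y Z) + A.D Y (A.Psi2 Z X) + A.D Z (A.Psi2 X Y)
    - A.Psi2 ⁅X, Y⁆ Z - A.Psi2 ⁅Y, Z⁆ X - A.Psi2 ⁅Z, X⁆ Y)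

/-- The Lie derivative `(L_ζ τ)(X)`. -/
def lieTau (X : V) : F := A.D A.zeta (A.tau X) - A.tau ⁅A.zeta, X⁆

/-- The Lie derivative `(L_ζ ψ)(X)`. -/
def liePsi (X : V) : V := ⁅A.zeta, A.psi X⁆ - A.psi ⁅A.zeta, X⁆

/-- The tensor field `h = (1/2) L_ζ ψ`. -/
def h (X : V) : V := ((1:ℝ)/2) • A.liePsi X

/-- The Nijenhuis torsion `[ψ,ψ](X,Y)`. -/
def nijPsi (X Y : V) : V :=
  A.psi (A.psi ⁅X, Y⁆) + ⁅A.psi X, A.psi Y⁆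
    - A.psi ⁅A.psi X, Y⁆ - A.psi ⁅X, A.psi Y⁆

/-- The tensor `K⁽¹⁾(X,Y) = [ψ,ψ](X,Y) - 2 dτ(X,Y) ζ`. -/
def K1 (X Y : V) : V := A.nijPsi X Y - (2 * A.dTau X Y) • A.zeta

/-- The tensor `K⁽²⁾(X,Y) = (L_{ψX} τ)(Y) - (L_{ψY} τ)(X)`. -/
def K2 (X Y : V) : F :=
  (A.D (A.psi X) (A.tau Y) - A.tau ⁅A.psi X, Y⁆)
    - (A.D (A.psi Y) (A.tau X) - A.tau ⁅A.psi Y, X⁆)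

/-- The covariant derivative `(∇_X ψ)(Y)`. -/
def covPsi (X Y : V) : V := A.nabla X (A.psi Y) - A.psi (A.nabla X Y)

/-- `M` is `τ`-normal: `K⁽¹⁾(X,Y) = 0` whenever `τ(X) = τ(Y) = 0`. -/
def TauNormal : Prop := ∀ X Y : V, A.tau X = 0 → A.tau Y = 0 → A.K1 X Y = 0

/-- `M` is normal: `K⁽¹⁾ = 0` identically. -/
def Normal : Prop := ∀ X Y : V, A.K1 X Y = 0

/-- `X` is a section of the `+1`-eigendistribution `V⁺` of `ψ`. -/
def Vp (X : V) : Prop := A.psi X = X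

/-- `X` is a section of the `-1`-eigendistribution `V⁻` of `ψ`. -/
def Vm (X : V) : Prop := A.psi X = -X

/-- `M` is a para-CR manifold: both eigendistributions `V⁺`, `V⁻` of `ψ` are
involutive. -/
def ParaCR : Prop :=
  (∀ X Y : V, A.Vp X → A.Vp Y → A.Vp ⁅X, Y⁆) ∧
  (∀ X Y : V, A.Vm X → A.Vm Y → A.Vm ⁅X, Y⁆)

/-- The characteristic form `τ` is a contact form: `dτ` is nondegenerate on
the kernel distribution of `τ`. -/
def IsContact : Prop :=
  ∀ X : V, A.tau X = 0 → (∀ Y : V, A.dTau X Y = 0) → X = 0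

/-- The Reeb vector field of the contact form `τ` equals the characteristic
vector field `ζ` (i.e. `τ(ζ) = 1`, which holds by definition, and
`ι_ζ dτ = 0`). -/
def ReebEqZeta : Prop := ∀ X : V, A.dTau A.zeta X = 0

/-- The Pang invariant `Π(X,Y) = (L_X L_Y τ)(ζ) = -τ([[ζ,X],Y])`; restricted
to sections of `V⁺` (resp. `V⁻`) it is the Pang invariant `Π₊` (resp. `Π₋`)
of the Legendrian foliation determined by `V⁺` (resp. `V⁻`). -/
def Pang (X Y : V) : F := - A.tau ⁅⁅A.zeta, X⁆, Y⁆

/-- The tensor field `χ(X,Y) = dτ(hX, ψY)`. -/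
def chi (X Y : V) : F := A.dTau (A.h X) (A.psi Y)

/-- `Dc` is a linear connection on `M`. -/
def IsConnection (Dc : V → V → V) : Prop :=
  (∀ X Y Z : V, Dc (X + Y) Z = Dc X Z + Dc Y Z) ∧
  (∀ (f : F) (X Y : V), Dc (f • X) Y = f • Dc X Y) ∧
  (∀ X Y Z : V, Dc X (Y + Z) = Dc X Y + Dc X Z) ∧
  (∀ (X : V) (f : F) (Y : V), Dc X (f • Y) = A.D X f • Y + f • Dc X Y)

/-- `Dc` is a parallelization: a linear connection making the whole almost
paracontact metric structure parallel: `∇̃ψ = 0`, `∇̃ζ = 0`, `∇̃τ = 0`,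
`∇̃g = 0`. -/
def IsParallelization (Dc : V → V → V) : Prop :=
  A.IsConnection Dc ∧
  (∀ X Y : V, Dc X (A.psi Y) = A.psi (Dc X Y)) ∧
  (∀ X : V, Dc X A.zeta = 0) ∧
  (∀ X Y : V, A.D X (A.tau Y) = A.tau (Dc X Y)) ∧
  (∀ X Y Z : V, A.D X (A.g Y Z) = A.g (Dc X Y) Z + A.g Y (Dc X Z))

end APCMS

/-! ### Auxiliary development -/

/-- The constant function `1/2`. -/
def pcHalf (F : Type*) [CommRing F] [Algebra ℝ F] : F := algebraMap ℝ F ((1:ℝ)/2)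

lemma half_add_half (F : Type*) [CommRing F] [Algebra ℝ F] :
    pcHalf F + pcHalf F = 1 := by
  unfold pcHalf
  rw [← map_add, show ((1:ℝ)/2 + (1:ℝ)/2) = 1 by norm_num, map_one]

lemma half_mul_two (F : Type*) [CommRing F] [Algebra ℝ F] :
    pcHalf F * 2 = 1 := by
  unfold pcHalf
  rw [show (2:F) = algebraMap ℝ F 2 from (map_ofNat _ 2).symm, ← map_mul]
  norm_num

lemma halfsmul_zero {F : Type*} [CommRing F] [Algebra ℝ F] {x : F}
    (h : ((1:ℝ)/2) • x = 0) : x = 0 := by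
  have h2 : ((2:ℝ) * ((1:ℝ)/2)) • x = 0 := by rw [mul_smul, h, smul_zero]
  norm_num at h2
  exact h2

lemma lie_comm' {V : Type*} [LieRing V] (a b : V) : ⁅a, b⁆ = -⁅b, a⁆ :=
  (lie_skew a b).symm

namespace APCMS

variable {F V : Type*} [CommRing F] [Algebra ℝ F]
  [LieRing V] [Module F V] [Module ℝ V] [IsScalarTower ℝ F V]
variable (A : APCMS F V)

lemma D_zero (X : V) : A.D X 0 = 0 := by
  have h := A.D_add X 0 0
  rw [add_zero] at h
  linear_combination -h

lemma D_one (X : V) : A.D X 1 = 0 := by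
  have h := A.D_mul X 1 1
  rw [mul_one, one_mul] at h
  linear_combination -h

lemma tau_zero : A.tau 0 = 0 := by
  have := A.tau_smul 0 0
  simpa using this

lemma psi_zero : A.psi 0 = 0 := by
  have := A.psi_smul 0 0
  simpa using this

lemma tau_neg (X : V) : A.tau (-X) = -A.tau X := by
  have h := A.tau_add X (-X)
  rw [add_neg_cancel, A.tau_zero] at h
  linear_combination -h

lemma psi_neg (X : V) : A.psi (-X) = -A.psi X := by
  have h := A.psi_add X (-X)
  rw [add_neg_cancel, A.psi_zero] at h
  exact eq_neg_of_add_eq_zero_right h.symm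

lemma tau_sub (X Y : V) : A.tau (X - Y) = A.tau X - A.tau Y := by
  rw [sub_eq_add_neg, A.tau_add, A.tau_neg, ← sub_eq_add_neg]

lemma psi_sub (X Y : V) : A.psi (X - Y) = A.psi X - A.psi Y := by
  rw [sub_eq_add_neg, A.psi_add, A.psi_neg, ← sub_eq_add_neg]

lemma bracket_smul_left (f : F) (X Y : V) :
    ⁅f • X, Y⁆ = f • ⁅X, Y⁆ - A.D Y f • X := by
  rw [lie_comm' (f • X) Y, A.bracket_smul, lie_comm' Y X, smul_neg]
  abel

lemma tau_vp {X : V} (h : A.Vp X) : A.tau X = 0 := by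
  rw [← h]
  exact A.tau_psi X

lemma tau_vm {X : V} (hX : A.Vm X) : A.tau X = 0 := by
  have h := A.tau_psi X
  rw [hX, A.tau_neg, neg_eq_zero] at h
  exact h

lemma tau_bracket_zeta (hR : A.ReebEqZeta) {X : V} (hx : A.tau X = 0) :
    A.tau ⁅A.zeta, X⁆ = 0 := by
  have h : ((1:ℝ)/2) • (A.D A.zeta (A.tau X) - A.D X (A.tau A.zeta)
      - A.tau ⁅A.zeta, X⁆) = 0 := hR X
  rw [hx, A.tau_zeta, A.D_zero, A.D_one] at h
  have h2 := halfsmul_zero h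
  linear_combination -h2

/-! ### `dτ` calculus -/

lemma dTau_eq_zero_of {X Y : V} (hx : A.tau X = 0) (hy : A.tau Y = 0)
    (hb : A.tau ⁅X, Y⁆ = 0) : A.dTau X Y = 0 := by
  unfold dTau
  rw [hx, hy, hb, A.D_zero, A.D_zero]
  norm_num

lemma dTau_skew (X Y : V) : A.dTau Y X = -A.dTau X Y := by
  unfold dTau
  rw [lie_comm' Y X, A.tau_neg, ← smul_neg]
  congr 1
  ring

lemma dTau_addY (X Y Z : V) : A.dTau X (Y + Z) = A.dTau X Y + A.dTau X Z := by
  unfold dTau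
  rw [A.tau_add, A.D_add, A.D_addX, lie_add, A.tau_add, ← smul_add]
  congr 1
  ring

lemma dTau_smulY (f : F) (X Y : V) : A.dTau X (f • Y) = f * A.dTau X Y := by
  unfold dTau
  rw [A.tau_smul, A.D_mul, A.D_smulX, A.bracket_smul, A.tau_add, A.tau_smul,
    A.tau_smul, mul_smul_comm]
  congr 1
  ring

lemma dTau_addX (X X' Y : V) :
    A.dTau (X + X') Y = A.dTau X Y + A.dTau X' Y := by
  rw [A.dTau_skew Y (X + X'), A.dTau_addY, A.dTau_skew X Y, A.dTau_skew X' Y]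
  ring

lemma dTau_smulX (f : F) (X Y : V) : A.dTau (f • X) Y = f * A.dTau X Y := by
  rw [A.dTau_skew Y (f • X), A.dTau_smulY, A.dTau_skew X Y]
  ring

/-! ### Nijenhuis torsion and `K1` calculus -/

lemma nij_addX (X X' Y : V) :
    A.nijPsi (X + X') Y = A.nijPsi X Y + A.nijPsi X' Y := by
  unfold nijPsi
  simp only [add_lie, A.psi_add]
  abel

lemma nij_skew (X Y : V) : A.nijPsi Y X = -A.nijPsi X Y := by
  unfold nijPsi
  rw [lie_comm' Y X, lie_comm' (A.psi Y) (A.psi X), lie_comm' (A.psi Y) X,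
    lie_comm' Y (A.psi X)]
  simp only [A.psi_neg]
  abel

lemma nij_smulX (f : F) (X Y : V) :
    A.nijPsi (f • X) Y = f • A.nijPsi X Y := by
  unfold nijPsi
  rw [A.psi_smul]
  rw [A.bracket_smul_left f X Y, A.bracket_smul_left f (A.psi X) (A.psi Y),
    A.bracket_smul_left f (A.psi X) Y, A.bracket_smul_left f X (A.psi Y)]
  simp only [A.psi_sub, A.psi_smul, smul_sub, smul_add]
  abel

lemma K1_addX (X X' Y : V) : A.K1 (X + X') Y = A.K1 X Y + A.K1 X' Y := by
  unfold K1
  rw [A.nij_addX, A.dTau_addX, mul_add, add_smul]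
  abel

lemma K1_skew (X Y : V) : A.K1 Y X = -A.K1 X Y := by
  unfold K1
  rw [A.nij_skew, A.dTau_skew, mul_neg, neg_smul]
  abel

lemma K1_smulX (f : F) (X Y : V) : A.K1 (f • X) Y = f • A.K1 X Y := by
  unfold K1
  rw [A.nij_smulX, A.dTau_smulX, smul_sub, smul_smul, mul_left_comm]

lemma K1_addY (X Y Z : V) : A.K1 X (Y + Z) = A.K1 X Y + A.K1 X Z := by
  rw [A.K1_skew (Y + Z) X, A.K1_addX, A.K1_skew Y X, A.K1_skew Z X]
  abel

lemma K1_smulY (f : F) (X Y : V) : A.K1 X (f • Y) = f • A.K1 X Y := by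
  rw [A.K1_skew (f • Y) X, A.K1_smulX, A.K1_skew Y X, smul_neg]

/-! ### Eigendistribution decomposition -/

lemma parts_sum (Z : V) :
    pcHalf F • (Z + A.psi Z) + pcHalf F • (Z - A.psi Z) = Z := by
  rw [← smul_add]
  have h : (Z + A.psi Z) + (Z - A.psi Z) = (2:F) • Z := by
    rw [two_smul]; abel
  rw [h, smul_smul, half_mul_two, one_smul]

lemma vp_part {Z : V} (hz : A.tau Z = 0) :
    A.Vp (pcHalf F • (Z + A.psi Z)) := by
  unfold Vp
  rw [A.psi_smul, A.psi_add, A.psi_psi, hz, zero_smul, sub_zero,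
    add_comm (A.psi Z) Z]

lemma vm_part {Z : V} (hz : A.tau Z = 0) :
    A.Vm (pcHalf F • (Z - A.psi Z)) := by
  unfold Vm
  rw [A.psi_smul, A.psi_sub, A.psi_psi, hz, zero_smul, sub_zero, ← smul_neg]
  congr 1
  abel

/-! ### `L_ζ ψ` on eigendistributions -/

lemma liePsi_vp_eq {P : V} (hP : A.Vp P) :
    A.liePsi P = ⁅A.zeta, P⁆ - A.psi ⁅A.zeta, P⁆ := by
  have hP' : A.psi P = P := hP
  unfold liePsi
  rw [hP']

lemma liePsi_vm_eq {N : V} (hN' : A.Vm N) :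
    A.liePsi N = -(⁅A.zeta, N⁆ + A.psi ⁅A.zeta, N⁆) := by
  have hN'' : A.psi N = -N := hN'
  unfold liePsi
  rw [hN'', lie_neg]
  abel

lemma vm_liePsi_vp (hR : A.ReebEqZeta) {P : V} (hP : A.Vp P) :
    A.Vm (A.liePsi P) := by
  unfold Vm
  rw [A.liePsi_vp_eq hP, A.psi_sub, A.psi_psi,
    A.tau_bracket_zeta hR (A.tau_vp hP), zero_smul, sub_zero]
  abel

lemma tau_liePsi_vp (hR : A.ReebEqZeta) {P : V} (hP : A.Vp P) :
    A.tau (A.liePsi P) = 0 := by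
  rw [A.liePsi_vp_eq hP, A.tau_sub, A.tau_psi,
    A.tau_bracket_zeta hR (A.tau_vp hP), sub_zero]

lemma K1_zeta_vp (hR : A.ReebEqZeta) {P : V} (hP : A.Vp P) :
    A.K1 A.zeta P = A.liePsi P := by
  have hP' : A.psi P = P := hP
  unfold K1 nijPsi liePsi
  simp only [A.psi_zeta, hP', zero_lie, A.psi_zero, A.psi_psi,
    A.tau_bracket_zeta hR (A.tau_vp hP), zero_smul, sub_zero, hR P, mul_zero,
    add_zero]

lemma K1_zeta_vm (hR : A.ReebEqZeta) {N : V} (hN' : A.Vm N) :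
    A.K1 A.zeta N = -A.liePsi N := by
  have hN'' : A.psi N = -N := hN'
  unfold K1 nijPsi liePsi
  simp only [A.psi_zeta, hN'', zero_lie, A.psi_zero, A.psi_psi, lie_neg,
    A.psi_neg, A.tau_bracket_zeta hR (A.tau_vm hN'), zero_smul, sub_zero,
    hR N, mul_zero, add_zero]
  abel

/-! ### Key bracket identities -/

lemma tau_bracket_liePsi_vp (hR : A.ReebEqZeta) (hCR : A.ParaCR) {P Y : V}
    (hP : A.Vp P) (hY : A.Vp Y) :
    A.tau ⁅A.liePsi P, Y⁆ = A.tau ⁅⁅A.zeta, P⁆, Y⁆ + A.tau ⁅⁅A.zeta, P⁆, Y⁆ := by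
  have hτB : A.tau ⁅A.zeta, P⁆ = 0 := A.tau_bracket_zeta hR (A.tau_vp hP)
  have htp : A.tau ⁅pcHalf F • (⁅A.zeta, P⁆ + A.psi ⁅A.zeta, P⁆), Y⁆ = 0 :=
    A.tau_vp (hCR.1 _ _ (A.vp_part hτB) hY)
  have h1 : A.tau ⁅⁅A.zeta, P⁆, Y⁆
      = A.tau ⁅pcHalf F • (⁅A.zeta, P⁆ - A.psi ⁅A.zeta, P⁆), Y⁆ := by
    conv_lhs => rw [← A.parts_sum ⁅A.zeta, P⁆]
    rw [add_lie, A.tau_add, htp, zero_add]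
  have h2 : ⁅A.zeta, P⁆ - A.psi ⁅A.zeta, P⁆
      = pcHalf F • (⁅A.zeta, P⁆ - A.psi ⁅A.zeta, P⁆)
        + pcHalf F • (⁅A.zeta, P⁆ - A.psi ⁅A.zeta, P⁆) := by
    rw [← add_smul, half_add_half, one_smul]
  rw [A.liePsi_vp_eq hP, h2, add_lie, A.tau_add, ← h1]

lemma tau_bracket_M_vm (hR : A.ReebEqZeta) (hCR : A.ParaCR) {N Y : V}
    (hN' : A.Vm N) (hY : A.Vm Y) :
    A.tau ⁅⁅A.zeta, N⁆ + A.psi ⁅A.zeta, N⁆, Y⁆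
      = A.tau ⁅⁅A.zeta, N⁆, Y⁆ + A.tau ⁅⁅A.zeta, N⁆, Y⁆ := by
  have hτB : A.tau ⁅A.zeta, N⁆ = 0 := A.tau_bracket_zeta hR (A.tau_vm hN')
  have htm : A.tau ⁅pcHalf F • (⁅A.zeta, N⁆ - A.psi ⁅A.zeta, N⁆), Y⁆ = 0 :=
    A.tau_vm (hCR.2 _ _ (A.vm_part hτB) hY)
  have h1 : A.tau ⁅⁅A.zeta, N⁆, Y⁆
      = A.tau ⁅pcHalf F • (⁅A.zeta, N⁆ + A.psi ⁅A.zeta, N⁆), Y⁆ := by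
    conv_lhs => rw [← A.parts_sum ⁅A.zeta, N⁆]
    rw [add_lie, A.tau_add, htm, add_zero]
  have h2 : ⁅A.zeta, N⁆ + A.psi ⁅A.zeta, N⁆
      = pcHalf F • (⁅A.zeta, N⁆ + A.psi ⁅A.zeta, N⁆)
        + pcHalf F • (⁅A.zeta, N⁆ + A.psi ⁅A.zeta, N⁆) := by
    rw [← add_smul, half_add_half, one_smul]
  conv_lhs => rw [h2]
  rw [add_lie, A.tau_add, ← h1]

/-! ### Flatness implies vanishing of `h` on eigendistributions -/

lemma liePsi_vp_zero (hCR : A.ParaCR) (hc : A.IsContact) (hR : A.ReebEqZeta)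
    (hflat : ∀ X Y : V, A.Vp X → A.Vp Y → A.Pang X Y = 0)
    {P : V} (hP : A.Vp P) : A.liePsi P = 0 := by
  have hτP := A.tau_vp hP
  have hτL : A.tau (A.liePsi P) = 0 := A.tau_liePsi_vp hR hP
  have hVmL : A.Vm (A.liePsi P) := A.vm_liePsi_vp hR hP
  apply hc _ hτL
  intro W
  have hτW0 : A.tau (W - A.tau W • A.zeta) = 0 := by
    rw [A.tau_sub, A.tau_smul, A.tau_zeta, mul_one, sub_self]
  have hWdec : W = pcHalf F • ((W - A.tau W • A.zeta)
        + A.psi (W - A.tau W • A.zeta))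
      + pcHalf F • ((W - A.tau W • A.zeta) - A.psi (W - A.tau W • A.zeta))
      + A.tau W • A.zeta := by
    rw [A.parts_sum]
    abel
  have h1 : A.dTau (A.liePsi P) (pcHalf F • ((W - A.tau W • A.zeta)
      + A.psi (W - A.tau W • A.zeta))) = 0 := by
    have hVp : A.Vp (pcHalf F • ((W - A.tau W • A.zeta)
        + A.psi (W - A.tau W • A.zeta))) := A.vp_part hτW0
    apply A.dTau_eq_zero_of hτL (A.tau_vp hVp)
    have hkey := A.tau_bracket_liePsi_vp hR hCR hP hVp
    have hpang := hflat P _ hP hVp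
    have hz : A.tau ⁅⁅A.zeta, P⁆, pcHalf F • ((W - A.tau W • A.zeta)
        + A.psi (W - A.tau W • A.zeta))⁆ = 0 := by
      have : -A.tau ⁅⁅A.zeta, P⁆, pcHalf F • ((W - A.tau W • A.zeta)
          + A.psi (W - A.tau W • A.zeta))⁆ = 0 := hpang
      rwa [neg_eq_zero] at this
    rw [hkey, hz, add_zero]
  have h2 : A.dTau (A.liePsi P) (pcHalf F • ((W - A.tau W • A.zeta)
      - A.psi (W - A.tau W • A.zeta))) = 0 := by
    have hVm : A.Vm (pcHalf F • ((W - A.tau W • A.zeta)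
        - A.psi (W - A.tau W • A.zeta))) := A.vm_part hτW0
    exact A.dTau_eq_zero_of hτL (A.tau_vm hVm)
      (A.tau_vm (hCR.2 _ _ hVmL hVm))
  have h3 : A.dTau (A.liePsi P) A.zeta = 0 := by
    rw [A.dTau_skew A.zeta (A.liePsi P), hR (A.liePsi P), neg_zero]
  rw [hWdec, A.dTau_addY, A.dTau_addY, h1, h2, A.dTau_smulY, h3, mul_zero]
  simp

lemma liePsi_vm_zero (hCR : A.ParaCR) (hc : A.IsContact) (hR : A.ReebEqZeta)
    (hflat : ∀ X Y : V, A.Vm X → A.Vm Y → A.Pang X Y = 0)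
    {N : V} (hN' : A.Vm N) : A.liePsi N = 0 := by
  have hτN := A.tau_vm hN'
  have hτB : A.tau ⁅A.zeta, N⁆ = 0 := A.tau_bracket_zeta hR hτN
  have hVpM : A.Vp (⁅A.zeta, N⁆ + A.psi ⁅A.zeta, N⁆) := by
    unfold Vp
    rw [A.psi_add, A.psi_psi, hτB, zero_smul, sub_zero]
    abel
  have hτM : A.tau (⁅A.zeta, N⁆ + A.psi ⁅A.zeta, N⁆) = 0 := by
    rw [A.tau_add, A.tau_psi, hτB, add_zero]
  have hM0 : ⁅A.zeta, N⁆ + A.psi ⁅A.zeta, N⁆ = 0 := by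
    apply hc _ hτM
    intro W
    have hτW0 : A.tau (W - A.tau W • A.zeta) = 0 := by
      rw [A.tau_sub, A.tau_smul, A.tau_zeta, mul_one, sub_self]
    have hWdec : W = pcHalf F • ((W - A.tau W • A.zeta)
          + A.psi (W - A.tau W • A.zeta))
        + pcHalf F • ((W - A.tau W • A.zeta) - A.psi (W - A.tau W • A.zeta))
        + A.tau W • A.zeta := by
      rw [A.parts_sum]
      abel
    have h1 : A.dTau (⁅A.zeta, N⁆ + A.psi ⁅A.zeta, N⁆)
        (pcHalf F • ((W - A.tau W • A.zeta)
          + A.psi (W - A.tau W • A.zeta))) = 0 := by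
      have hVp : A.Vp (pcHalf F • ((W - A.tau W • A.zeta)
          + A.psi (W - A.tau W • A.zeta))) := A.vp_part hτW0
      exact A.dTau_eq_zero_of hτM (A.tau_vp hVp)
        (A.tau_vp (hCR.1 _ _ hVpM hVp))
    have h2 : A.dTau (⁅A.zeta, N⁆ + A.psi ⁅A.zeta, N⁆)
        (pcHalf F • ((W - A.tau W • A.zeta)
          - A.psi (W - A.tau W • A.zeta))) = 0 := by
      have hVm : A.Vm (pcHalf F • ((W - A.tau W • A.zeta)
          - A.psi (W - A.tau W • A.zeta))) := A.vm_part hτW0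
      apply A.dTau_eq_zero_of hτM (A.tau_vm hVm)
      have hkey := A.tau_bracket_M_vm hR hCR hN' hVm
      have hpang := hflat N _ hN' hVm
      have hz : A.tau ⁅⁅A.zeta, N⁆, pcHalf F • ((W - A.tau W • A.zeta)
          - A.psi (W - A.tau W • A.zeta))⁆ = 0 := by
        have : -A.tau ⁅⁅A.zeta, N⁆, pcHalf F • ((W - A.tau W • A.zeta)
            - A.psi (W - A.tau W • A.zeta))⁆ = 0 := hpang
        rwa [neg_eq_zero] at this
      rw [hkey, hz, add_zero]
    have h3 : A.dTau (⁅A.zeta, N⁆ + A.psi ⁅A.zeta, N⁆) A.zeta = 0 := by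
      rw [A.dTau_skew A.zeta (⁅A.zeta, N⁆ + A.psi ⁅A.zeta, N⁆),
        hR (⁅A.zeta, N⁆ + A.psi ⁅A.zeta, N⁆), neg_zero]
    rw [hWdec, A.dTau_addY, A.dTau_addY, h1, h2, A.dTau_smulY, h3, mul_zero]
    simp
  rw [A.liePsi_vm_eq hN', hM0, neg_zero]

/-! ### Normality from vanishing of `h` on eigendistributions -/

lemma K1_zeta_ker (hR : A.ReebEqZeta)
    (HP : ∀ P : V, A.Vp P → A.liePsi P = 0)
    (HM : ∀ N : V, A.Vm N → A.liePsi N = 0)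
    {Z : V} (hz : A.tau Z = 0) : A.K1 A.zeta Z = 0 := by
  have hdec : Z = pcHalf F • (Z + A.psi Z) + pcHalf F • (Z - A.psi Z) :=
    (A.parts_sum Z).symm
  rw [hdec, A.K1_addY, A.K1_zeta_vp hR (A.vp_part hz),
    A.K1_zeta_vm hR (A.vm_part hz), HP _ (A.vp_part hz), HM _ (A.vm_part hz),
    neg_zero, add_zero]

lemma normal_of (hN : A.TauNormal) (hR : A.ReebEqZeta)
    (HP : ∀ P : V, A.Vp P → A.liePsi P = 0)
    (HM : ∀ N : V, A.Vm N → A.liePsi N = 0) : A.Normal := by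
  have hzz : A.K1 A.zeta A.zeta = 0 := by
    unfold K1 nijPsi
    simp [A.psi_zeta, A.psi_zero, hR A.zeta]
  intro X Y
  have hX0 : A.tau (X - A.tau X • A.zeta) = 0 := by
    rw [A.tau_sub, A.tau_smul, A.tau_zeta, mul_one, sub_self]
  have hY0 : A.tau (Y - A.tau Y • A.zeta) = 0 := by
    rw [A.tau_sub, A.tau_smul, A.tau_zeta, mul_one, sub_self]
  have e1 : A.K1 (X - A.tau X • A.zeta) (Y - A.tau Y • A.zeta) = 0 :=
    hN _ _ hX0 hY0
  have e2 : A.K1 A.zeta (X - A.tau X • A.zeta) = 0 :=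
    A.K1_zeta_ker hR HP HM hX0
  have e3 : A.K1 A.zeta (Y - A.tau Y • A.zeta) = 0 :=
    A.K1_zeta_ker hR HP HM hY0
  have e2' : A.K1 (X - A.tau X • A.zeta) A.zeta = 0 := by
    rw [A.K1_skew, e2, neg_zero]
  have hXd : X = (X - A.tau X • A.zeta) + A.tau X • A.zeta := by abel
  have hYd : Y = (Y - A.tau Y • A.zeta) + A.tau Y • A.zeta := by abel
  calc A.K1 X Y = A.K1 ((X - A.tau X • A.zeta) + A.tau X • A.zeta)
        ((Y - A.tau Y • A.zeta) + A.tau Y • A.zeta) := by rw [← hXd, ← hYd]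
    _ = 0 := by
        rw [A.K1_addX, A.K1_addY, A.K1_addY, e1, A.K1_smulY, e2',
          A.K1_smulX, e3, A.K1_smulX, A.K1_smulY, hzz]
        simp

/-! ### Normality implies flatness -/

lemma pang_vp_zero (hCR : A.ParaCR) (hR : A.ReebEqZeta) (hnorm : A.Normal)
    {P Y : V} (hP : A.Vp P) (hY : A.Vp Y) : A.Pang P Y = 0 := by
  have hL : A.liePsi P = 0 := by
    rw [← A.K1_zeta_vp hR hP]
    exact hnorm _ _
  have hB : A.Vp ⁅A.zeta, P⁆ := by
    have h := A.liePsi_vp_eq hP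
    rw [hL] at h
    exact (sub_eq_zero.mp h.symm).symm
  have hz : A.tau ⁅⁅A.zeta, P⁆, Y⁆ = 0 := A.tau_vp (hCR.1 _ _ hB hY)
  show -A.tau ⁅⁅A.zeta, P⁆, Y⁆ = 0
  rw [hz, neg_zero]

lemma pang_vm_zero (hCR : A.ParaCR) (hR : A.ReebEqZeta) (hnorm : A.Normal)
    {N Y : V} (hN' : A.Vm N) (hY : A.Vm Y) : A.Pang N Y = 0 := by
  have hL : A.liePsi N = 0 := by
    have h := A.K1_zeta_vm hR hN'
    rw [hnorm _ _] at h
    exact neg_eq_zero.mp h.symm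
  have hB : A.Vm ⁅A.zeta, N⁆ := by
    have h := A.liePsi_vm_eq hN'
    rw [hL] at h
    have h2 : ⁅A.zeta, N⁆ + A.psi ⁅A.zeta, N⁆ = 0 := neg_eq_zero.mp h.symm
    exact eq_neg_of_add_eq_zero_right h2
  have hz : A.tau ⁅⁅A.zeta, N⁆, Y⁆ = 0 := A.tau_vm (hCR.2 _ _ hB hY)
  show -A.tau ⁅⁅A.zeta, N⁆, Y⁆ = 0
  rw [hz, neg_zero]

end APCMS


/-- Let `M` be a `τ`-normal almost paracontact metric para-CR
manifold whose characteristic form `τ` is a contact form and whose Reeb vector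
field equals the characteristic vector field `ζ`. Then `M` is flat as a
bi-Legendrian manifold (both Pang invariants `Π₊`, `Π₋` vanish) if and only if
`M` is normal (`K⁽¹⁾ = 0` identically). In particular every para-Sasakian
manifold (`dτ = Ψ` and normal) is flat as a bi-Legendrian manifold. -/
theorem biLegendrian_flat_iff_normal
    {F V : Type*} [CommRing F] [Algebra ℝ F]
    [LieRing V] [Module F V] [Module ℝ V] [IsScalarTower ℝ F V]
    (A : APCMS F V) (hN : A.TauNormal) (hCR : A.ParaCR)
    (hc : A.IsContact) (hR : A.ReebEqZeta) :
    (((∀ X Y : V, A.Vp X → A.Vp Y → A.Pang X Y = 0) ∧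
      (∀ X Y : V, A.Vm X → A.Vm Y → A.Pang X Y = 0)) ↔ A.Normal) ∧
    ((∀ X Y : V, A.dTau X Y = A.Psi2 X Y) → A.Normal →
      (∀ X Y : V, A.Vp X → A.Vp Y → A.Pang X Y = 0) ∧
      (∀ X Y : V, A.Vm X → A.Vm Y → A.Pang X Y = 0)) := by
  have key : ((∀ X Y : V, A.Vp X → A.Vp Y → A.Pang X Y = 0) ∧
      (∀ X Y : V, A.Vm X → A.Vm Y → A.Pang X Y = 0)) ↔ A.Normal := by
    constructor
    · rintro ⟨fp, fm⟩
      exact A.normal_of hN hR (fun P hP => A.liePsi_vp_zero hCR hc hR fp hP)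
        (fun N hN' => A.liePsi_vm_zero hCR hc hR fm hN')
    · intro hnorm
      exact ⟨fun X Y hX hY => A.pang_vp_zero hCR hR hnorm hX hY,
        fun X Y hX hY => A.pang_vm_zero hCR hR hnorm hX hY⟩
  exact ⟨key, fun _ hnorm => key.mpr hnorm⟩
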